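/- The optimal value of the MICP-GCS formulation equals the optimal value of the biconvex formulation of the MT-TSP; that is, the infimum of Σ_{e ∈ E} l_e over all points feasible for the MICP-GCS formulation equals the infimum of Σ_{e ∈ E} l_e over all points feasible for the biconvex formulation. -/
import Mathlib


open Pointwise

/-- Nodes of the MT-TSP graph: the depot `s`, its copy `s'`, and the targets. -/
inductive Node (α : Type) where
  | s : Node α
  | s' : Node α
  | tar : α → Node α
  deriving DecidableEq, Fintype

/-- The edge set `E` of the MT-TSP graph: all edges from `s` to each target, between
every ordered pair of distinct targets, and from each target to `s'`. -/
def isEdge {α : Type} [DecidableEq α] : Node α × Node α → Bool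
  | (Node.s, Node.tar _) => true
  | (Node.tar a, Node.tar b) => a != b
  | (Node.tar _, Node.s') => true
  | _ => false

/-- The edge set as a finset. -/
def Efin (α : Type) [Fintype α] [DecidableEq α] : Finset (Node α × Node α) :=
  Finset.univ.filter (fun e => isEdge e = true)

/-- Edges of `E` entering node `i`. -/
def Ein {α : Type} [Fintype α] [DecidableEq α] (i : Node α) : Finset (Node α × Node α) :=
  (Efin α).filter (fun e => e.2 = i)

/-- Edges of `E` leaving node `i`. -/
def Eout {α : Type} [Fintype α] [DecidableEq α] (i : Node α) : Finset (Node α × Node α) :=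
  (Efin α).filter (fun e => e.1 = i)

/-- The trajectory segment of a node with initial position `pbar` at time `tlo`, constant
velocity `v`, and time window `[tlo, thi]`, in space-time `ℝ² × ℝ = ℝ³`. -/
def traj (pbar v : ℝ × ℝ) (tlo thi : ℝ) : Set ((ℝ × ℝ) × ℝ) :=
  {q | ∃ t ∈ Set.Icc tlo thi, q = (pbar + (t - tlo) • v, t)}

/-- The perspective of a set `X`: `X̃ := {(x, λ) : λ ≥ 0, x ∈ λ • X}`. -/
def perspective (X : Set ((ℝ × ℝ) × ℝ)) : Set (((ℝ × ℝ) × ℝ) × ℝ) :=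
  {q | 0 ≤ q.2 ∧ q.1 ∈ q.2 • X}

/-- Feasibility for the MICP-GCS formulation of the MT-TSP: binary edge variables `y`,
edge variables `z, z'` (space-time points scaled by `y`), cost addends `l`, subject to
the flow constraints, the augmented flow conservation
`Σ_{e ∈ E_in(i)} (z'_{e,t}, y_e) = Σ_{e ∈ E_out(i)} (z_{e,t}, y_e)` at each target,
the perspective constraints, and the speed and cone constraints. -/
def GCSFeasible {α : Type} [Fintype α] [DecidableEq α]
    (pbar vel : Node α → ℝ × ℝ) (tlo thi : Node α → ℝ) (vmax : ℝ)
    (y : Node α × Node α → ℝ) (z z' : Node α × Node α → (ℝ × ℝ) × ℝ)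
    (l : Node α × Node α → ℝ) : Prop :=
  (∀ e ∈ Efin α, y e = 0 ∨ y e = 1) ∧
  (∑ e ∈ Eout (Node.s : Node α), y e = 1) ∧
  (∑ e ∈ Ein (Node.s' : Node α), y e = 1) ∧
  (∀ a : α, ∑ e ∈ Ein (Node.tar a), y e = 1) ∧
  (∀ a : α, ∑ e ∈ Ein (Node.tar a), (z' e).2 = ∑ e ∈ Eout (Node.tar a), (z e).2) ∧
  (∀ a : α, ∑ e ∈ Ein (Node.tar a), y e = ∑ e ∈ Eout (Node.tar a), y e) ∧
  (∀ e ∈ Efin α,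
    (z e, y e) ∈ perspective (traj (pbar e.1) (vel e.1) (tlo e.1) (thi e.1)) ∧
    (z' e, y e) ∈ perspective (traj (pbar e.2) (vel e.2) (tlo e.2) (thi e.2))) ∧
  (∀ e ∈ Efin α,
    0 ≤ l e ∧ l e ≤ vmax * ((z' e).2 - (z e).2) ∧
    ((z' e).1.1 - (z e).1.1) ^ 2 + ((z' e).1.2 - (z e).1.2) ^ 2 ≤ (l e) ^ 2)

/-- Feasibility for the biconvex formulation of the MT-TSP: space-time points `(pᵢ, tᵢ)`
for all nodes, binary edge variables `y`, edge variables `z, z'`, and cost addends `l`,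
subject to the flow constraints, `(pᵢ, tᵢ) ∈ Xᵢ`, the bilinear constraints
`z_e = y_e • (pᵢ, tᵢ)`, `z'_e = y_e • (pⱼ, tⱼ)`, and the speed and cone constraints. -/
def BiconvexFeasible {α : Type} [Fintype α] [DecidableEq α]
    (pbar vel : Node α → ℝ × ℝ) (tlo thi : Node α → ℝ) (vmax : ℝ)
    (pt : Node α → (ℝ × ℝ) × ℝ) (y : Node α × Node α → ℝ)
    (z z' : Node α × Node α → (ℝ × ℝ) × ℝ) (l : Node α × Node α → ℝ) : Prop :=
  (∀ e ∈ Efin α, y e = 0 ∨ y e = 1) ∧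
  (∑ e ∈ Eout (Node.s : Node α), y e = 1) ∧
  (∑ e ∈ Ein (Node.s' : Node α), y e = 1) ∧
  (∀ a : α, ∑ e ∈ Ein (Node.tar a), y e = 1) ∧
  (∀ a : α, ∑ e ∈ Ein (Node.tar a), y e = ∑ e ∈ Eout (Node.tar a), y e) ∧
  (∀ i : Node α, pt i ∈ traj (pbar i) (vel i) (tlo i) (thi i)) ∧
  (∀ e ∈ Efin α, z e = y e • pt e.1 ∧ z' e = y e • pt e.2) ∧
  (∀ e ∈ Efin α,
    0 ≤ l e ∧ l e ≤ vmax * ((z' e).2 - (z e).2) ∧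
    ((z' e).1.1 - (z e).1.1) ^ 2 + ((z' e).1.2 - (z e).1.2) ^ 2 ≤ (l e) ^ 2)


lemma traj_nonempty (pbar v : ℝ × ℝ) {tlo thi : ℝ} (h : tlo ≤ thi) :
    (traj pbar v tlo thi).Nonempty :=
  ⟨(pbar, tlo), tlo, ⟨le_refl _, h⟩, by simp⟩

lemma traj_time_inj {pbar v : ℝ × ℝ} {tlo thi : ℝ} {q₁ q₂ : (ℝ × ℝ) × ℝ}
    (h₁ : q₁ ∈ traj pbar v tlo thi) (h₂ : q₂ ∈ traj pbar v tlo thi)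
    (ht : q₁.2 = q₂.2) : q₁ = q₂ := by
  obtain ⟨t₁, _, rfl⟩ := h₁
  obtain ⟨t₂, _, rfl⟩ := h₂
  simp only [Prod.snd] at ht
  subst ht
  rfl

lemma mem_of_perspective_one {X : Set ((ℝ × ℝ) × ℝ)} {z : (ℝ × ℝ) × ℝ}
    (h : (z, (1:ℝ)) ∈ perspective X) : z ∈ X := by
  have h2 := h.2
  rwa [show ((z, (1:ℝ)).1 : (ℝ × ℝ) × ℝ) = z from rfl,
    show ((z, (1:ℝ)).2 : ℝ) = 1 from rfl, one_smul] at h2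

lemma eq_zero_of_perspective_zero {X : Set ((ℝ × ℝ) × ℝ)} (hX : X.Nonempty)
    {z : (ℝ × ℝ) × ℝ} (h : (z, (0:ℝ)) ∈ perspective X) : z = 0 := by
  have h2 := h.2
  rw [show ((z, (0:ℝ)).2 : ℝ) = 0 from rfl, Set.zero_smul_set hX] at h2
  simpa using h2

lemma exists_y_one {β : Type*} {S : Finset β} {y : β → ℝ}
    (h01 : ∀ e ∈ S, y e = 0 ∨ y e = 1) (hsum : ∑ e ∈ S, y e = 1) :
    ∃ e ∈ S, y e = 1 := by
  by_contra h
  push_neg at h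
  have h0 : ∑ e ∈ S, y e = 0 :=
    Finset.sum_eq_zero (fun e he => (h01 e he).resolve_right (h e he))
  rw [h0] at hsum
  norm_num at hsum

lemma y_one_unique {β : Type*} [DecidableEq β] {S : Finset β} {y : β → ℝ}
    (h01 : ∀ e ∈ S, y e = 0 ∨ y e = 1) (hsum : ∑ e ∈ S, y e = 1)
    {e₁ e₂ : β} (h₁ : e₁ ∈ S) (h₂ : e₂ ∈ S) (hy₁ : y e₁ = 1) (hy₂ : y e₂ = 1) :
    e₁ = e₂ := by
  by_contra hne
  have hle : ∑ e ∈ ({e₁, e₂} : Finset β), y e ≤ ∑ e ∈ S, y e := by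
    apply Finset.sum_le_sum_of_subset_of_nonneg
    · intro x hx
      simp only [Finset.mem_insert, Finset.mem_singleton] at hx
      rcases hx with rfl | rfl <;> assumption
    · intro e he _
      rcases h01 e he with h | h <;> simp [h]
  rw [Finset.sum_pair hne, hy₁, hy₂, hsum] at hle
  norm_num at hle

lemma mem_Efin {α : Type} [Fintype α] [DecidableEq α] {e : Node α × Node α} :
    e ∈ Efin α ↔ isEdge e = true := by
  simp [Efin]

lemma edge_snd_ne_s {α : Type} [DecidableEq α] {e : Node α × Node α}
    (h : isEdge e = true) : e.2 ≠ Node.s := by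
  obtain ⟨e1, e2⟩ := e
  cases e1 <;> cases e2 <;> simp_all [isEdge]

lemma edge_fst_ne_s' {α : Type} [DecidableEq α] {e : Node α × Node α}
    (h : isEdge e = true) : e.1 ≠ Node.s' := by
  obtain ⟨e1, e2⟩ := e
  cases e1 <;> cases e2 <;> simp_all [isEdge]


/-- The optimal value of the MICP-GCS formulation equals the optimal value
of the biconvex formulation of the MT-TSP: the infimum of `Σ_{e ∈ E} l_e` over the
MICP-GCS feasible set equals the infimum of `Σ_{e ∈ E} l_e` over the biconvex
feasible set. -/
theorem stmt_12 {α : Type} [Fintype α] [DecidableEq α] [Nonempty α]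
    (pbar vel : Node α → ℝ × ℝ) (tlo thi : Node α → ℝ) (hwin : ∀ i, tlo i ≤ thi i)
    (vmax : ℝ) (hvmax : 0 < vmax) :
    sInf {c : ℝ | ∃ (y : Node α × Node α → ℝ) (z z' : Node α × Node α → (ℝ × ℝ) × ℝ)
        (l : Node α × Node α → ℝ),
        GCSFeasible pbar vel tlo thi vmax y z z' l ∧ c = ∑ e ∈ Efin α, l e} =
    sInf {c : ℝ | ∃ (pt : Node α → (ℝ × ℝ) × ℝ) (y : Node α × Node α → ℝ)
        (z z' : Node α × Node α → (ℝ × ℝ) × ℝ) (l : Node α × Node α → ℝ),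
        BiconvexFeasible pbar vel tlo thi vmax pt y z z' l ∧ c = ∑ e ∈ Efin α, l e} := by
  congr 1
  ext c
  constructor
  · -- GCS feasible → Biconvex feasible
    rintro ⟨y, z, z', l, ⟨h01, hs, hs', hin, htime, hcons, hpersp, hcone⟩, rfl⟩
    have hne : ∀ i : Node α, (traj (pbar i) (vel i) (tlo i) (thi i)).Nonempty :=
      fun i => traj_nonempty _ _ (hwin i)
    have hz0 : ∀ e ∈ Efin α, y e = 0 → z e = 0 ∧ z' e = 0 := by
      intro e he hy
      obtain ⟨h1, h2⟩ := hpersp e he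
      rw [hy] at h1 h2
      exact ⟨eq_zero_of_perspective_zero (hne e.1) h1,
        eq_zero_of_perspective_zero (hne e.2) h2⟩
    have key : ∀ i : Node α, ∃ q ∈ traj (pbar i) (vel i) (tlo i) (thi i),
        ∀ e ∈ Efin α, y e = 1 → (e.1 = i → z e = q) ∧ (e.2 = i → z' e = q) := by
      intro i
      cases i with
      | s =>
        have hsub : ∀ e ∈ Eout (Node.s : Node α), e ∈ Efin α :=
          fun e he => (Finset.mem_filter.mp he).1
        obtain ⟨e₀, he₀, hy₀⟩ := exists_y_one (fun e he => h01 e (hsub e he)) hs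
        have he₀f := hsub e₀ he₀
        have he₀1 : e₀.1 = Node.s := (Finset.mem_filter.mp he₀).2
        refine ⟨z e₀, ?_, ?_⟩
        · have h1 := (hpersp e₀ he₀f).1
          rw [hy₀] at h1
          have hm := mem_of_perspective_one h1
          rwa [he₀1] at hm
        · intro e hef hy
          constructor
          · intro he1
            have heo : e ∈ Eout (Node.s : Node α) := Finset.mem_filter.mpr ⟨hef, he1⟩
            rw [y_one_unique (fun f hf => h01 f (hsub f hf)) hs heo he₀ hy hy₀]
          · intro he2
            exact absurd he2 (edge_snd_ne_s (mem_Efin.mp hef))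
      | s' =>
        have hsub : ∀ e ∈ Ein (Node.s' : Node α), e ∈ Efin α :=
          fun e he => (Finset.mem_filter.mp he).1
        obtain ⟨e₀, he₀, hy₀⟩ := exists_y_one (fun e he => h01 e (hsub e he)) hs'
        have he₀f := hsub e₀ he₀
        have he₀2 : e₀.2 = Node.s' := (Finset.mem_filter.mp he₀).2
        refine ⟨z' e₀, ?_, ?_⟩
        · have h1 := (hpersp e₀ he₀f).2
          rw [hy₀] at h1
          have hm := mem_of_perspective_one h1
          rwa [he₀2] at hm
        · intro e hef hy
          constructor
          · intro he1
            exact absurd he1 (edge_fst_ne_s' (mem_Efin.mp hef))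
          · intro he2
            have hei : e ∈ Ein (Node.s' : Node α) := Finset.mem_filter.mpr ⟨hef, he2⟩
            rw [y_one_unique (fun f hf => h01 f (hsub f hf)) hs' hei he₀ hy hy₀]
      | tar a =>
        have hsubin : ∀ e ∈ Ein (Node.tar a : Node α), e ∈ Efin α :=
          fun e he => (Finset.mem_filter.mp he).1
        have hsubout : ∀ e ∈ Eout (Node.tar a : Node α), e ∈ Efin α :=
          fun e he => (Finset.mem_filter.mp he).1
        obtain ⟨e₀, he₀, hy₀⟩ := exists_y_one (fun e he => h01 e (hsubin e he)) (hin a)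
        have he₀f := hsubin e₀ he₀
        have he₀2 : e₀.2 = Node.tar a := (Finset.mem_filter.mp he₀).2
        have hsumout : ∑ f ∈ Eout (Node.tar a : Node α), y f = 1 := by
          rw [← hcons a]; exact hin a
        have hq : z' e₀ ∈ traj (pbar (Node.tar a)) (vel (Node.tar a))
            (tlo (Node.tar a)) (thi (Node.tar a)) := by
          have h1 := (hpersp e₀ he₀f).2
          rw [hy₀] at h1
          have hm := mem_of_perspective_one h1
          rwa [he₀2] at hm
        refine ⟨z' e₀, hq, ?_⟩
        intro e hef hy
        constructor
        · intro he1
          have heo : e ∈ Eout (Node.tar a : Node α) := Finset.mem_filter.mpr ⟨hef, he1⟩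
          have hze : z e ∈ traj (pbar (Node.tar a)) (vel (Node.tar a))
              (tlo (Node.tar a)) (thi (Node.tar a)) := by
            have h1 := (hpersp e hef).1
            rw [hy] at h1
            have hm := mem_of_perspective_one h1
            rwa [he1] at hm
          have hin_sum : ∑ f ∈ Ein (Node.tar a : Node α), (z' f).2 = (z' e₀).2 := by
            apply Finset.sum_eq_single_of_mem e₀ he₀
            intro f hf hfe
            have hyf : y f = 0 := by
              rcases h01 f (hsubin f hf) with h | h
              · exact h
              · exact absurd
                  (y_one_unique (fun g hg => h01 g (hsubin g hg)) (hin a) hf he₀ h hy₀) hfe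
            rw [(hz0 f (hsubin f hf) hyf).2]
            rfl
          have hout_sum : ∑ f ∈ Eout (Node.tar a : Node α), (z f).2 = (z e).2 := by
            apply Finset.sum_eq_single_of_mem e heo
            intro f hf hfe
            have hyf : y f = 0 := by
              rcases h01 f (hsubout f hf) with h | h
              · exact h
              · exact absurd
                  (y_one_unique (fun g hg => h01 g (hsubout g hg)) hsumout hf heo h hy) hfe
            rw [(hz0 f (hsubout f hf) hyf).1]
            rfl
          have ht : (z e).2 = (z' e₀).2 := by
            rw [← hout_sum, ← htime a, hin_sum]
          exact traj_time_inj hze hq ht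
        · intro he2
          have hei : e ∈ Ein (Node.tar a : Node α) := Finset.mem_filter.mpr ⟨hef, he2⟩
          rw [y_one_unique (fun f hf => h01 f (hsubin f hf)) (hin a) hei he₀ hy hy₀]
    choose pt hpt hprop using key
    refine ⟨pt, y, z, z', l, ⟨h01, hs, hs', hin, hcons, hpt, ?_, hcone⟩, rfl⟩
    intro e hef
    rcases h01 e hef with hy | hy
    · obtain ⟨hz, hz'⟩ := hz0 e hef hy
      rw [hy, hz, hz', zero_smul, zero_smul]
      exact ⟨rfl, rfl⟩
    · rw [hy, one_smul, one_smul]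
      exact ⟨(hprop e.1 e hef hy).1 rfl, (hprop e.2 e hef hy).2 rfl⟩
  · -- Biconvex feasible → GCS feasible
    rintro ⟨pt, y, z, z', l, ⟨h01, hs, hs', hin, hcons, htraj, hbil, hcone⟩, rfl⟩
    refine ⟨y, z, z', l, ⟨h01, hs, hs', hin, ?_, hcons, ?_, hcone⟩, rfl⟩
    · intro a
      have h1 : ∑ e ∈ Ein (Node.tar a : Node α), (z' e).2
          = (∑ e ∈ Ein (Node.tar a : Node α), y e) * (pt (Node.tar a)).2 := by
        rw [Finset.sum_mul]
        refine Finset.sum_congr rfl (fun e he => ?_)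
        have hef : e ∈ Efin α := (Finset.mem_filter.mp he).1
        have he2 : e.2 = Node.tar a := (Finset.mem_filter.mp he).2
        rw [(hbil e hef).2, he2, Prod.smul_snd, smul_eq_mul]
      have h2 : ∑ e ∈ Eout (Node.tar a : Node α), (z e).2
          = (∑ e ∈ Eout (Node.tar a : Node α), y e) * (pt (Node.tar a)).2 := by
        rw [Finset.sum_mul]
        refine Finset.sum_congr rfl (fun e he => ?_)
        have hef : e ∈ Efin α := (Finset.mem_filter.mp he).1
        have he1 : e.1 = Node.tar a := (Finset.mem_filter.mp he).2
        rw [(hbil e hef).1, he1, Prod.smul_snd, smul_eq_mul]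
      rw [h1, h2, hcons a]
    · intro e hef
      have hy0 : (0:ℝ) ≤ y e := by rcases h01 e hef with h | h <;> simp [h]
      obtain ⟨hb1, hb2⟩ := hbil e hef
      exact ⟨⟨hy0, hb1 ▸ Set.smul_mem_smul_set (htraj e.1)⟩,
        ⟨hy0, hb2 ▸ Set.smul_mem_smul_set (htraj e.2)⟩⟩
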